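/- arXiv:1402.6251 — 2 statements merged into one kernel-verified Lean document; each statement's English description precedes it below -/
import Mathlib

section
/- Let q ∈ (0,1), k,l coprime positive integers, and let A, B be elements of a *-algebra satisfying BA = qAB, B*A = qAB*, BB* = B*B, AA* + BB* = 1, A*A + q²B*B = 1. Set a = BB* and b = Bᵏ Aˡ. Then a* = a, a b* = q^{-2l} b* a, b*b = q^{2kl} aᵏ ∏_{m=0}^{l-1}(1 - q^{2(m+1)} a), and b b* = aᵏ ∏_{m=1}^{l}(1 - q^{-2(m-1)} a). -/
/-!
Put `a = B B* = B* B`. The sphere relations read `A A* = 1 - a` and `A* A = 1 - q² a`, and these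
give `a A = q² A a` and `A* a = q² a A*`; moreover `a` commutes with `B` and `B*`. Moving
powers of `a` past `A^l` and `A*^l` produces the scalars, and the telescoping identities
`A*^(n+1) A^(n+1) = A*^n A^n (1 - q^(2(n+1)) a)`, `A^(n+1) A*^(n+1) = A^n A*^n (1 - q^(-2n) a)`
produce the two products.
-/

def QCommute {S R : Type*} [SMul S R] [Mul R] (c : S) (x y : R) : Prop :=
  x * y = c • (y * x)

namespace QCommute

section Semiring

variable {S R : Type*} [CommSemiring S] [Semiring R] [Algebra S R] {c : S} {x y : R}

theorem pow_right (h : QCommute c x y) (n : ℕ) : QCommute (c ^ n) x (y ^ n) := by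
  induction n with
  | zero => simp [QCommute]
  | succ n ih =>
    unfold QCommute at *
    rw [pow_succ, ← mul_assoc, ih, smul_mul_assoc, mul_assoc, h, mul_smul_comm, smul_smul,
      ← pow_succ, ← mul_assoc]

theorem pow_left (h : QCommute c x y) (n : ℕ) : QCommute (c ^ n) (x ^ n) y := by
  induction n with
  | zero => simp [QCommute]
  | succ n ih =>
    unfold QCommute at *
    rw [pow_succ', mul_assoc, ih, mul_smul_comm, ← mul_assoc, h, smul_mul_assoc, smul_smul,
      mul_assoc, ← pow_succ', ← pow_succ]

theorem pow_pow (h : QCommute c x y) (m n : ℕ) : QCommute (c ^ (m * n)) (x ^ m) (y ^ n) := by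
  rw [pow_mul]
  exact (h.pow_left m).pow_right n

end Semiring

theorem symm {S R : Type*} [Semifield S] [Semiring R] [Algebra S R] {c : S} {x y : R}
    (h : QCommute c x y) (hc : c ≠ 0) : QCommute c⁻¹ y x := by
  unfold QCommute at *
  rw [h, smul_smul, inv_mul_cancel₀ hc, one_smul]

end QCommute

theorem Commute.list_prod_map_one_sub_smul_right {S R ι : Type*} [CommSemiring S] [Ring R]
    [Algebra S R] {z a : R} (h : Commute z a) (f : ι → S) (L : List ι) :
    Commute z ((L.map fun i => 1 - f i • a).prod) :=
  Commute.list_prod_right _ _ fun _ hw => by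
    obtain ⟨i, -, rfl⟩ := List.mem_map.mp hw
    exact (Commute.one_right z).sub_right (h.smul_right _)

section Defect

variable {S R : Type*} [CommSemiring S] [Ring R] [Algebra S R] {c : S} {x y a : R}

theorem defect_qCommute (hxy : x * y = 1 - a) (hyx : y * x = 1 - c • a) : QCommute c a x := by
  have ha : a * x = x - x * (y * x) := by rw [← mul_assoc, hxy]; noncomm_ring
  rw [QCommute, ha, hyx, mul_sub, mul_one, mul_smul_comm, sub_sub_cancel]

theorem qCommute_defect (hxy : x * y = 1 - a) (hyx : y * x = 1 - c • a) : QCommute c y a := by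
  have ha : y * a = y - y * x * y := by rw [mul_assoc, hxy]; noncomm_ring
  rw [QCommute, ha, hyx, sub_mul, one_mul, smul_mul_assoc, sub_sub_cancel]

theorem pow_mul_pow_eq_prod_of_defect (hxy : x * y = 1 - a) (hyx : y * x = 1 - c • a) (n : ℕ) :
    y ^ n * x ^ n = ((List.range n).map fun m => 1 - c ^ (m + 1) • a).prod := by
  induction n with
  | zero => simp
  | succ n ih =>
    have hax : a * x ^ n = c ^ n • (x ^ n * a) := (defect_qCommute hxy hyx).pow_right n
    calc y ^ (n + 1) * x ^ (n + 1) = y ^ n * (y * x) * x ^ n := by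
          rw [pow_succ y, pow_succ' x]; simp only [mul_assoc]
      _ = y ^ n * x ^ n * (1 - c ^ (n + 1) • a) := by
        rw [hyx, mul_sub, mul_one, sub_mul, mul_smul_comm, smul_mul_assoc, mul_assoc, hax,
          mul_smul_comm, smul_smul, ← mul_assoc, mul_sub, mul_one, mul_smul_comm, pow_succ']
      _ = _ := by rw [ih, List.range_succ, List.map_append, List.prod_append]; simp

end Defect

theorem pow_mul_pow_eq_prod_inv_of_defect {S R : Type*} [Semifield S] [Ring R] [Algebra S R]
    {c : S} {x y a : R} (hc : c ≠ 0) (hxy : x * y = 1 - a) (hyx : y * x = 1 - c • a) (n : ℕ) :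
    x ^ n * y ^ n = ((List.range n).map fun m => 1 - (c ^ m)⁻¹ • a).prod := by
  induction n with
  | zero => simp
  | succ n ih =>
    have hay : a * y ^ n = (c ^ n)⁻¹ • (y ^ n * a) :=
      ((qCommute_defect hxy hyx).pow_left n).symm (pow_ne_zero n hc)
    calc x ^ (n + 1) * y ^ (n + 1) = x ^ n * (x * y) * y ^ n := by
          rw [pow_succ x, pow_succ' y]; simp only [mul_assoc]
      _ = x ^ n * y ^ n * (1 - (c ^ n)⁻¹ • a) := by
        rw [hxy, mul_sub, mul_one, sub_mul, mul_assoc, hay, mul_smul_comm, ← mul_assoc, mul_sub,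
          mul_one, mul_smul_comm]
      _ = _ := by rw [ih, List.range_succ, List.map_append, List.prod_append]; simp

theorem weighted_projective_relations_general (q : ℝ) (hq : q ∈ Set.Ioo (0 : ℝ) 1)
    (k l : ℕ)
    {R : Type*} [Ring R] [Algebra ℝ R] [StarRing R]
    (A B : R)
    (h3 : B * star B = star B * B)
    (h4 : A * star A + B * star B = 1)
    (h5 : star A * A + (q ^ 2) • (star B * B) = 1)
    (a b : R) (ha : a = B * star B) (hb : b = B ^ k * A ^ l) :
    star a = a ∧
    a * star b = (q ^ (-(2 * (l : ℤ)))) • (star b * a) ∧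
    star b * b = (q ^ (2 * k * l)) •
      (a ^ k * ((List.range l).map (fun m => (1 : R) - (q ^ (2 * (m + 1))) • a)).prod) ∧
    b * star b =
      a ^ k * ((List.range l).map (fun m => (1 : R) - (q ^ (-(2 * (m : ℤ)))) • a)).prod := by
  have hq2 : q ^ 2 ≠ 0 := pow_ne_zero 2 hq.1.ne'
  have hAAs : A * star A = 1 - a := by rw [ha, ← h4, add_sub_cancel_right]
  have hAsA : star A * A = 1 - q ^ 2 • a := by rw [ha, h3, ← h5, add_sub_cancel_right]
  have hBBs : Commute B (star B) := h3
  have haBs : Commute a (star B) := ha ▸ hBBs.mul_left (Commute.refl _)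
  have hsb : star b = star A ^ l * star B ^ k := by rw [hb, star_mul, star_pow, star_pow]
  have hzpow : ∀ n : ℕ, q ^ (-(2 * (n : ℤ))) = ((q ^ 2) ^ n)⁻¹ := fun n => by
    rw [zpow_neg, ← pow_mul]; norm_cast
  -- the last product runs over `List.range l` coerced to `List ℤ`
  simp only [List.pure_def, List.bind_eq_flatMap, ← List.map_eq_flatMap, List.map_map,
    Function.comp_def]
  simp_rw [hzpow, mul_assoc 2 k l, pow_mul q 2]
  refine ⟨by rw [ha, star_mul, star_star], ?_, ?_, ?_⟩
  · rw [hsb, ← mul_assoc, ((qCommute_defect hAAs hAsA).pow_left l).symm (pow_ne_zero l hq2),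
      smul_mul_assoc, mul_assoc, (haBs.pow_right k).eq, ← mul_assoc]
  · have hBsB : star B ^ k * B ^ k = a ^ k := by rw [ha, h3, hBBs.symm.mul_pow]
    rw [hsb, hb, mul_assoc, ← mul_assoc (star B ^ k), hBsB,
      (defect_qCommute hAAs hAsA).pow_pow k l, mul_smul_comm, ← mul_assoc,
      pow_mul_pow_eq_prod_of_defect hAAs hAsA,
      ((Commute.refl a).list_prod_map_one_sub_smul_right _ _).pow_left k |>.eq]
  · rw [hsb, hb, mul_assoc, ← mul_assoc (A ^ l), pow_mul_pow_eq_prod_inv_of_defect hq2 hAAs hAsA,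
      ← ((haBs.symm.list_prod_map_one_sub_smul_right _ _).pow_left k).eq, ← mul_assoc,
      ← hBBs.mul_pow, ← ha]

/-- In a `*`-algebra with elements `A, B` satisfying the `C[SU_{2,q}]`
relations, the elements `a = BB*` and `b = BᵏAˡ` satisfy the quantum weighted
projective space relations of Brzeziński–Fairfax. -/
theorem weighted_projective_relations (q : ℝ) (hq : q ∈ Set.Ioo (0 : ℝ) 1)
    (k l : ℕ) (hk : 0 < k) (hl : 0 < l) (hco : Nat.Coprime k l)
    {R : Type*} [Ring R] [Algebra ℝ R] [StarRing R]
    (A B : R)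
    (h1 : B * A = q • (A * B))
    (h2 : star B * A = q • (A * star B))
    (h3 : B * star B = star B * B)
    (h4 : A * star A + B * star B = 1)
    (h5 : star A * A + (q ^ 2) • (star B * B) = 1)
    (a b : R) (ha : a = B * star B) (hb : b = B ^ k * A ^ l) :
    star a = a ∧
    a * star b = (q ^ (-(2 * (l : ℤ)))) • (star b * a) ∧
    star b * b = (q ^ (2 * k * l)) •
      (a ^ k * ((List.range l).map (fun m => (1 : R) - (q ^ (2 * (m + 1))) • a)).prod) ∧
    b * star b =
      a ^ k * ((List.range l).map (fun m => (1 : R) - (q ^ (-(2 * (m : ℤ)))) • a)).prod :=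
  weighted_projective_relations_general q hq k l A B h3 h4 h5 a b ha hb
end

section
/- Let q ∈ (0,1), l ∈ ℕ, s ∈ {1,...,l}, and define operators on ℓ²(ℕ₀) by a e_p = q^{2(lp+s-1)} e_p and b* e_p = q^{lp+s-1} ∏_{r=1}^{l} √(1 - q^{2(lp+s-r)}) e_{p-1} (with b* e_0 = 0). Then these operators satisfy the quantum teardrop relations with k = 1: a* = a, a b* = q^{-2l} b* a, b*b = q^{2l} a ∏_{m=0}^{l-1}(1 - q^{2(m+1)} a), b b* = a ∏_{m=1}^{l}(1 - q^{-2(m-1)} a). -/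
/-!
In the basis `e`, `a` is diagonal with real eigenvalues `λ_p = q^{2(lp+s-1)}` and `b*` is a
backward weighted shift with real weights `w_p`, so `b` is the forward shift with the same weights.
Each relation therefore reduces to an identity of scalars on every `e_p`: `a b*` and `b* a` differ
by `λ_p / λ_{p+1} = q^{-2l}`, while `b* b` multiplies `e_p` and `b b*` multiplies `e_{p+1}` by
`w_p²`, a product of factors `1 - q^{2(l(p+1)+s-r-1)}` that can be written either in terms of `λ_p`
(after reversing the order of the factors) or in terms of `λ_{p+1}`.
On `e_0` the last relation holds because the factor with `m = s - 1` vanishes.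
-/

open ContinuousLinearMap Finset

namespace HilbertBasis

variable {ι 𝕜 H : Type*} [RCLike 𝕜] [NormedAddCommGroup H] [InnerProductSpace 𝕜 H]

section

variable (e : HilbertBasis ι 𝕜 H)

theorem ext_inner_left {x y : H} (h : ∀ i, inner 𝕜 (e i) x = inner 𝕜 (e i) y) : x = y :=
  e.repr.injective <| lp.ext <| funext fun i => by rw [e.repr_apply_apply, e.repr_apply_apply, h]

protected theorem ext {F : Type*} [NormedAddCommGroup F] [NormedSpace 𝕜 F] {T S : H →L[𝕜] F}
    (h : ∀ i, T (e i) = S (e i)) : T = S :=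
  ext_on (Submodule.dense_iff_topologicalClosure_eq_top.mpr e.dense_span) <| by
    rintro _ ⟨i, rfl⟩
    exact h i

theorem inner_eq_ite [DecidableEq ι] (i j : ι) :
    inner 𝕜 (e i) (e j) = if i = j then 1 else 0 :=
  orthonormal_iff_ite.mp e.orthonormal i j

theorem adjoint_apply_eq_of_forall_inner [CompleteSpace H] {T : H →L[𝕜] H} {x y : H}
    (h : ∀ i, inner 𝕜 (T (e i)) x = inner 𝕜 (e i) y) : adjoint T x = y :=
  e.ext_inner_left fun i => by rw [adjoint_inner_right, h]

theorem adjoint_eq_self_of_apply_eq_smul [CompleteSpace H] {a : H →L[𝕜] H} {α : ι → ℝ}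
    (ha : ∀ i, a (e i) = (α i : 𝕜) • e i) : adjoint a = a := by
  classical
  refine e.ext fun i => e.adjoint_apply_eq_of_forall_inner fun j => ?_
  rw [ha, ha, inner_smul_left, inner_smul_right, e.inner_eq_ite, RCLike.conj_ofReal]
  split_ifs with h
  · rw [h]
  · simp

end

section WeightedShift

variable (e : HilbertBasis ℕ 𝕜 H) {b : H →L[𝕜] H}

theorem mul_eq_smul_mul_of_weightedShift {a : H →L[𝕜] H} {α c : ℕ → 𝕜} {μ : 𝕜}
    (ha : ∀ p, a (e p) = α p • e p) (hb0 : b (e 0) = 0) (hb : ∀ p, b (e (p + 1)) = c p • e p)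
    (hα : ∀ p, α p = μ * α (p + 1)) : a * b = μ • (b * a) :=
  e.ext fun p => by
    rcases p with _ | p
    · simp [hb0, ha]
    · rw [mul_apply_eq_comp, smul_apply, mul_apply_eq_comp, hb, ha, map_smul, map_smul, hb, ha,
        smul_smul, smul_smul, smul_smul, hα p]
      congr 1
      ring

variable [CompleteSpace H]

theorem adjoint_apply_of_weightedShift {c : ℕ → ℝ}
    (hb0 : b (e 0) = 0) (hb : ∀ p, b (e (p + 1)) = (c p : 𝕜) • e p) (p : ℕ) :
    adjoint b (e p) = (c p : 𝕜) • e (p + 1) := by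
  refine e.adjoint_apply_eq_of_forall_inner fun j => ?_
  rcases j with _ | j
  · simp [hb0, inner_smul_right, e.inner_eq_ite]
  · rw [hb, inner_smul_left, inner_smul_right, e.inner_eq_ite, e.inner_eq_ite,
      RCLike.conj_ofReal]
    by_cases h : j = p
    · simp [h]
    · simp [h]

theorem mul_adjoint_eq_of_weightedShift {c : ℕ → ℝ} {T : H →L[𝕜] H}
    (hb0 : b (e 0) = 0) (hb : ∀ p, b (e (p + 1)) = (c p : 𝕜) • e p)
    (hT : ∀ p, T (e p) = ((c p ^ 2 : ℝ) : 𝕜) • e p) : b * adjoint b = T :=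
  e.ext fun p => by
    rw [mul_apply_eq_comp, e.adjoint_apply_of_weightedShift hb0 hb, map_smul, hb, smul_smul, hT,
      RCLike.ofReal_pow, sq]

theorem adjoint_mul_eq_of_weightedShift {c : ℕ → ℝ} {T : H →L[𝕜] H}
    (hb0 : b (e 0) = 0) (hb : ∀ p, b (e (p + 1)) = (c p : 𝕜) • e p)
    (hT0 : T (e 0) = 0) (hT : ∀ p, T (e (p + 1)) = ((c p ^ 2 : ℝ) : 𝕜) • e (p + 1)) :
    adjoint b * b = T :=
  e.ext fun p => by
    rcases p with _ | p
    · rw [mul_apply_eq_comp, hb0, map_zero, hT0]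
    · rw [mul_apply_eq_comp, hb, map_smul, e.adjoint_apply_of_weightedShift hb0 hb, smul_smul,
        hT, RCLike.ofReal_pow, sq]

end WeightedShift

end HilbertBasis

namespace ContinuousLinearMap

theorem prod_map_range_apply_of_apply_eq_smul {R M : Type*} [CommSemiring R]
    [TopologicalSpace M] [AddCommMonoid M] [Module R M] (f : ℕ → M →L[R] M) (g : ℕ → R)
    {x : M} (h : ∀ m, f m x = g m • x) (n : ℕ) :
    ((List.range n).map f).prod x = (∏ m ∈ range n, g m) • x := by
  induction n with
  | zero => simp
  | succ n ih => rw [List.prod_range_succ, mul_apply_eq_comp, h, map_smul, ih, smul_smul,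
      prod_range_succ, mul_comm]

theorem mul_prod_one_sub_smul_apply {R M : Type*} [CommRing R] [TopologicalSpace M]
    [AddCommGroup M] [Module R M] [IsTopologicalAddGroup M] [ContinuousConstSMul R M]
    {a : M →L[R] M} {x : M} {μ : R} (ha : a x = μ • x) (g : ℕ → R) (n : ℕ) :
    (a * ((List.range n).map fun m => 1 - g m • a).prod) x
      = (μ * ∏ m ∈ range n, (1 - g m * μ)) • x := by
  have h m : (1 - g m • a) x = (1 - g m * μ) • x := by
    rw [sub_apply, one_apply_eq_self, smul_apply, ha, smul_smul, sub_smul, one_smul]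
  rw [mul_apply_eq_comp, prod_map_range_apply_of_apply_eq_smul _ _ h, map_smul, ha, smul_smul,
    mul_comm]

end ContinuousLinearMap

noncomputable def teardropEigenvalue (q : ℝ) (l s p : ℕ) : ℝ :=
  q ^ ((2 : ℤ) * (l * p + s - 1))

noncomputable def teardropWeight (q : ℝ) (l s p : ℕ) : ℝ :=
  q ^ ((l : ℤ) * (p + 1) + s - 1) *
    ∏ r ∈ range l, √(1 - q ^ ((2 : ℤ) * ((l : ℤ) * (p + 1) + s - (r + 1))))

section TeardropCoefficients

variable {q : ℝ} (l s p : ℕ)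

theorem teardropEigenvalue_eq_zpow_mul_succ (hq : q ≠ 0) :
    teardropEigenvalue q l s p = q ^ (-(2 * (l : ℤ))) * teardropEigenvalue q l s (p + 1) := by
  rw [teardropEigenvalue, teardropEigenvalue, ← zpow_add₀ hq]
  push_cast
  ring_nf

theorem teardropWeight_sq (hq0 : 0 < q) (hq1 : q ≤ 1) :
    teardropWeight q l s p ^ 2 = q ^ ((2 : ℤ) * ((l : ℤ) * (p + 1) + s - 1)) *
      ∏ r ∈ range l, (1 - q ^ ((2 : ℤ) * ((l : ℤ) * (p + 1) + s - (r + 1)))) := by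
  rw [teardropWeight, mul_pow, ← prod_pow, ← zpow_natCast, ← zpow_mul, mul_comm _ ((2 : ℕ) : ℤ)]
  refine congrArg _ (prod_congr rfl fun r hr => Real.sq_sqrt (sub_nonneg.2 ?_))
  have hr : (r : ℤ) + 1 ≤ l := by exact_mod_cast mem_range.1 hr
  exact zpow_le_one₀ hq0 hq1 (by nlinarith)

theorem teardropWeight_sq_eq_prod_eigenvalue (hq0 : 0 < q) (hq1 : q ≤ 1) :
    teardropWeight q l s p ^ 2 = q ^ (2 * l) * (teardropEigenvalue q l s p *
      ∏ m ∈ range l, (1 - q ^ (2 * (m + 1)) * teardropEigenvalue q l s p)) := by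
  have hfactor : ∀ r ∈ range l, 1 - q ^ ((2 : ℤ) * ((l : ℤ) * (p + 1) + s - (r + 1)))
      = 1 - q ^ (2 * (l - 1 - r + 1)) * teardropEigenvalue q l s p := by
    intro r hr
    have hcast : ((l - 1 - r : ℕ) : ℤ) = l - 1 - r := by
      have := mem_range.1 hr
      omega
    rw [teardropEigenvalue, ← zpow_natCast, ← zpow_add₀ hq0.ne']
    push_cast [hcast]
    ring_nf
  have hprefix : q ^ ((2 : ℤ) * ((l : ℤ) * (p + 1) + s - 1))
      = q ^ (2 * l) * teardropEigenvalue q l s p := by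
    rw [teardropEigenvalue, ← zpow_natCast, ← zpow_add₀ hq0.ne']
    push_cast
    ring_nf
  rw [teardropWeight_sq l s p hq0 hq1, prod_congr rfl hfactor,
    prod_range_reflect (fun m => 1 - q ^ (2 * (m + 1)) * teardropEigenvalue q l s p), hprefix,
    mul_assoc]

theorem teardropWeight_sq_eq_prod_eigenvalue_succ (hq0 : 0 < q) (hq1 : q ≤ 1) :
    teardropWeight q l s p ^ 2 = teardropEigenvalue q l s (p + 1) *
      ∏ m ∈ range l, (1 - q ^ (-(2 * (m : ℤ))) * teardropEigenvalue q l s (p + 1)) := by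
  have hfactor : ∀ r ∈ range l, 1 - q ^ ((2 : ℤ) * ((l : ℤ) * (p + 1) + s - (r + 1)))
      = 1 - q ^ (-(2 * (r : ℤ))) * teardropEigenvalue q l s (p + 1) := by
    intro r _
    rw [teardropEigenvalue, ← zpow_add₀ hq0.ne']
    push_cast
    ring_nf
  rw [teardropWeight_sq l s p hq0 hq1, prod_congr rfl hfactor, teardropEigenvalue]
  push_cast
  rfl

theorem teardropEigenvalue_zero_mul_prod (hq : q ≠ 0) (hs1 : 1 ≤ s) (hsl : s ≤ l) :
    teardropEigenvalue q l s 0 *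
      ∏ m ∈ range l, (1 - q ^ (-(2 * (m : ℤ))) * teardropEigenvalue q l s 0) = 0 := by
  refine mul_eq_zero_of_right _ (prod_eq_zero (mem_range.2 (by omega : s - 1 < l)) ?_)
  rw [teardropEigenvalue, ← zpow_add₀ hq]
  push_cast [Nat.cast_sub hs1]
  ring_nf
  simp

end TeardropCoefficients

theorem teardrop_representation_relations_general (q : ℝ) (hq : q ∈ Set.Ioo (0 : ℝ) 1)
    (l : ℕ) (s : ℕ) (hs1 : 1 ≤ s) (hsl : s ≤ l)
    {H : Type*} [NormedAddCommGroup H] [InnerProductSpace ℂ H] [CompleteSpace H]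
    (e : HilbertBasis ℕ ℂ H) (a bStar : H →L[ℂ] H)
    (ha : ∀ p : ℕ, a (e p) = ((q ^ ((2 : ℤ) * (l * p + s - 1)) : ℝ) : ℂ) • e p)
    (hb0 : bStar (e 0) = 0)
    (hbS : ∀ p : ℕ, bStar (e (p + 1)) =
      ((q ^ ((l : ℤ) * (p + 1) + s - 1) *
        ∏ r ∈ Finset.range l,
          Real.sqrt (1 - q ^ ((2 : ℤ) * ((l : ℤ) * (p + 1) + s - (r + 1)))) : ℝ) : ℂ) • e p) :
    adjoint a = a ∧
    a * bStar = ((q : ℂ) ^ (-(2 * (l : ℤ)))) • (bStar * a) ∧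
    bStar * adjoint bStar = ((q : ℂ) ^ (2 * l)) •
      (a * ((List.range l).map
        (fun m => (1 : H →L[ℂ] H) - ((q : ℂ) ^ (2 * (m + 1))) • a)).prod) ∧
    adjoint bStar * bStar =
      a * ((List.range l).map
        (fun m => (1 : H →L[ℂ] H) - ((q : ℂ) ^ (-(2 * (m : ℤ)))) • a)).prod := by
  obtain ⟨hq0, hq1⟩ := hq
  -- The cast `(m : ℤ)` in the last relation turns `List.range l` into a list of integers
  -- through the list monad; map it back to a list over `ℕ`.
  simp only [List.pure_def, List.bind_eq_flatMap, ← List.map_eq_flatMap, List.map_map,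
    Function.comp_def]
  have ha' : ∀ p, a (e p) = (teardropEigenvalue q l s p : ℂ) • e p := ha
  have hb' : ∀ p, bStar (e (p + 1)) = (teardropWeight q l s p : ℂ) • e p := hbS
  refine ⟨e.adjoint_eq_self_of_apply_eq_smul ha',
    e.mul_eq_smul_mul_of_weightedShift ha' hb0 hb' fun p => ?_,
    e.mul_adjoint_eq_of_weightedShift (c := teardropWeight q l s) hb0 hb' fun p => ?_,
    e.adjoint_mul_eq_of_weightedShift (c := teardropWeight q l s) hb0 hb' ?_ fun p => ?_⟩
  · exact_mod_cast teardropEigenvalue_eq_zpow_mul_succ l s p hq0.ne'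
  · rw [smul_apply, mul_prod_one_sub_smul_apply (ha' p), smul_smul,
      teardropWeight_sq_eq_prod_eigenvalue l s p hq0 hq1.le]
    norm_cast
  · rw [mul_prod_one_sub_smul_apply (ha' 0)]
    refine smul_eq_zero_of_left ?_ _
    exact_mod_cast teardropEigenvalue_zero_mul_prod l s hq0.ne' hs1 hsl
  · rw [mul_prod_one_sub_smul_apply (ha' (p + 1)),
      teardropWeight_sq_eq_prod_eigenvalue_succ l s p hq0 hq1.le]
    norm_cast

/-- The operators `a e_p = q^{2(lp+s-1)} e_p` and
`b* e_p = q^{lp+s-1} ∏_{r=1}^{l} √(1-q^{2(lp+s-r)}) e_{p-1}` (with `b* e_0 = 0`)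
on `ℓ²(ℕ₀)` satisfy the quantum teardrop relations (`k = 1`). Here `b` is the
adjoint of the given operator `b*`. -/
theorem teardrop_representation_relations (q : ℝ) (hq : q ∈ Set.Ioo (0 : ℝ) 1)
    (l : ℕ) (hl : 0 < l) (s : ℕ) (hs1 : 1 ≤ s) (hsl : s ≤ l)
    {H : Type*} [NormedAddCommGroup H] [InnerProductSpace ℂ H] [CompleteSpace H]
    (e : HilbertBasis ℕ ℂ H) (a bStar : H →L[ℂ] H)
    (ha : ∀ p : ℕ, a (e p) = ((q ^ ((2 : ℤ) * (l * p + s - 1)) : ℝ) : ℂ) • e p)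
    (hb0 : bStar (e 0) = 0)
    (hbS : ∀ p : ℕ, bStar (e (p + 1)) =
      ((q ^ ((l : ℤ) * (p + 1) + s - 1) *
        ∏ r ∈ Finset.range l,
          Real.sqrt (1 - q ^ ((2 : ℤ) * ((l : ℤ) * (p + 1) + s - (r + 1)))) : ℝ) : ℂ) • e p) :
    adjoint a = a ∧
    a * bStar = ((q : ℂ) ^ (-(2 * (l : ℤ)))) • (bStar * a) ∧
    bStar * adjoint bStar = ((q : ℂ) ^ (2 * l)) •
      (a * ((List.range l).map
        (fun m => (1 : H →L[ℂ] H) - ((q : ℂ) ^ (2 * (m + 1))) • a)).prod) ∧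
    adjoint bStar * bStar =
      a * ((List.range l).map
        (fun m => (1 : H →L[ℂ] H) - ((q : ℂ) ^ (-(2 * (m : ℤ)))) • a)).prod :=
  teardrop_representation_relations_general q hq l s hs1 hsl e a bStar ha hb0 hbS
end
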